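/- arXiv:1904.03671 — 2 statements merged into one kernel-verified Lean document; each statement's English description precedes it below -/
import Mathlib

section
/- Let (D,≤) be an algebraic L-domain and {x_1,…,x_n} a nonempty finite subset of K*(D). Then the conjunction ↑x_1 ∧ ↑x_2 ∧ … ∧ ↑x_n in the associated calculus (L(P_D),⊢_D) is an irreducible conjunction if and only if sup{x_1,…,x_n} exists in D. -/
/- ## Syntax of disjunctive propositional logic -/

/-- Raw formulae over a set `P` of atomic formulae: atoms, the constants
`T` and `F`, binary conjunction, and disjunction of an arbitrary family
of formulae. -/
inductive Fm (P : Type) : Type 1 where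
  | atom : P → Fm P
  | tt : Fm P
  | ff : Fm P
  | conj : Fm P → Fm P → Fm P
  | disj : {ι : Type} → (ι → Fm P) → Fm P

namespace Fm

/-- The valid sequents of the disjunctive sequent calculus generated from the
disjunctive basis `(P, A)`, where `A` is the set of atomic disjointness
assumptions `p₁,…,pₙ ⊢ F` (each given by a finite nonempty set of atoms). -/
inductive Seq {P : Type} (A : Set (Set P)) : Set (Fm P) → Fm P → Prop where
  | ax {s : Set P} : s ∈ A → s.Finite → s.Nonempty → Seq A (Fm.atom '' s) Fm.ff
  | id (φ : Fm P) : Seq A {φ} φ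
  | lwk {Γ : Set (Fm P)} {ψ : Fm P} (φ : Fm P) : Seq A Γ ψ → Seq A (insert φ Γ) ψ
  | cut {Γ Δ : Set (Fm P)} {φ ψ : Fm P} :
      Seq A Γ φ → Seq A (insert φ Δ) ψ → Seq A (Γ ∪ Δ) ψ
  | lf (φ : Fm P) : Seq A {Fm.ff} φ
  | rt : Seq A ∅ Fm.tt
  | landl {Γ : Set (Fm P)} {φ ψ θ : Fm P} :
      Seq A (insert φ (insert ψ Γ)) θ → Seq A (insert (Fm.conj φ ψ) Γ) θ
  | randr {Γ Δ : Set (Fm P)} {φ ψ : Fm P} :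
      Seq A Γ φ → Seq A Δ ψ → Seq A (Γ ∪ Δ) (Fm.conj φ ψ)
  | ldisj {Γ : Set (Fm P)} {θ : Fm P} {ι : Type} {f : ι → Fm P} :
      (∀ i, Seq A (insert (f i) Γ) θ) → (∀ i j, i ≠ j → Seq A {f i, f j} Fm.ff) →
      Seq A (insert (Fm.disj f) Γ) θ
  | rdisj {Γ : Set (Fm P)} {ι : Type} {f : ι → Fm P} (i₀ : ι) :
      Seq A Γ (f i₀) → (∀ i j, i ≠ j → Seq A {f i, f j} Fm.ff) →
      Seq A Γ (Fm.disj f)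

/-- The wellformed formulae `L(P)` generated from the disjunctive basis
`(P, A)`: disjunctions are only formed over provably pairwise disjoint
families. -/
inductive WF {P : Type} (A : Set (Set P)) : Fm P → Prop where
  | atom (p : P) : WF A (Fm.atom p)
  | tt : WF A Fm.tt
  | ff : WF A Fm.ff
  | conj {φ ψ : Fm P} : WF A φ → WF A ψ → WF A (Fm.conj φ ψ)
  | disj {ι : Type} {f : ι → Fm P} : (∀ i, WF A (f i)) →
      (∀ i j, i ≠ j → Seq A {f i, f j} Fm.ff) → WF A (Fm.disj f)

end Fm

/- ## Generic notions relative to a wellformedness predicate `W` (the set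
`L(P)` of formulae) and an entailment relation `E` (the valid sequents). -/

section Defs

variable {P Q R : Type}

/-- `φ` is a tautology: `T ⊢ φ` is valid. -/
def Taut (W : Fm P → Prop) (E : Set (Fm P) → Fm P → Prop) (φ : Fm P) : Prop :=
  W φ ∧ E {Fm.tt} φ

/-- `φ` is a contradiction: `φ ⊢ F` is valid. -/
def Contra (W : Fm P → Prop) (E : Set (Fm P) → Fm P → Prop) (φ : Fm P) : Prop :=
  W φ ∧ E {φ} Fm.ff

/-- `φ` is satisfiable: neither a tautology nor a contradiction. -/
def Satisfiable (W : Fm P → Prop) (E : Set (Fm P) → Fm P → Prop) (φ : Fm P) : Prop :=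
  W φ ∧ ¬ Taut W E φ ∧ ¬ Contra W E φ

/-- Built up from atomic formulae only by conjunctive connectives. -/
inductive ConjShape {P : Type} : Fm P → Prop where
  | atom (p : P) : ConjShape (Fm.atom p)
  | conj {φ ψ : Fm P} : ConjShape φ → ConjShape ψ → ConjShape (Fm.conj φ ψ)

/-- A conjunction: a satisfiable formula built up from atomic formulae only
by conjunctive connectives. -/
def IsConjForm (W : Fm P → Prop) (E : Set (Fm P) → Fm P → Prop) (φ : Fm P) : Prop :=
  ConjShape φ ∧ Satisfiable W E φ

/-- `X[⊢] = {φ ∈ L(P) : Γ ⊢ φ is valid for some finite Γ ⊆ X}`. -/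
def entClose (W : Fm P → Prop) (E : Set (Fm P) → Fm P → Prop) (X : Set (Fm P)) :
    Set (Fm P) :=
  {φ | W φ ∧ ∃ Γ : Set (Fm P), Γ ⊆ X ∧ Γ.Finite ∧ E Γ φ}

/-- A logical state: a nonempty proper subset `S` of `L(P)` such that
(S1) any flat formula `⋁̇ᵢ μᵢ` in `S` has some disjunct `μᵢ₀ ∈ S`, and
(S2) `S[⊢] ⊆ S`. -/
structure IsLogicalState (W : Fm P → Prop) (E : Set (Fm P) → Fm P → Prop)
    (S : Set (Fm P)) : Prop where
  nonempty : S.Nonempty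
  subset : S ⊆ {φ | W φ}
  proper : S ≠ {φ | W φ}
  s1 : ∀ (ι : Type) (f : ι → Fm P), (∀ i, IsConjForm W E (f i)) →
      (∀ i j, i ≠ j → E {f i, f j} Fm.ff) → Satisfiable W E (Fm.disj f) →
      Fm.disj f ∈ S → ∃ i, f i ∈ S
  s2 : entClose W E S ⊆ S

/-- `[X]_S`: the intersection of all logical states `T` with `X ⊆ T ⊆ S`. -/
def clIn (W : Fm P → Prop) (E : Set (Fm P) → Fm P → Prop) (X S : Set (Fm P)) :
    Set (Fm P) :=
  ⋂₀ {T | IsLogicalState W E T ∧ X ⊆ T ∧ T ⊆ S}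

/-- An irreducible conjunction. -/
def IsIrredConj (W : Fm P → Prop) (E : Set (Fm P) → Fm P → Prop) (μ : Fm P) : Prop :=
  IsConjForm W E μ ∧ ∀ (ι : Type) (f : ι → Fm P), (∀ i, W (f i)) →
    (∀ i j, i ≠ j → E {f i, f j} Fm.ff) → E {μ} (Fm.disj f) → ∃ i, E {μ} (f i)

/-- An expressive disjunctive sequent calculus: every satisfiable formula is
logically equivalent to an irreducible flat formula (from below disjunctwise). -/
def Expressive (W : Fm P → Prop) (E : Set (Fm P) → Fm P → Prop) : Prop :=
  ∀ ψ : Fm P, Satisfiable W E ψ → ∃ (ι : Type) (f : ι → Fm P),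
    (∀ i, IsIrredConj W E (f i)) ∧ (∀ i j, i ≠ j → E {f i, f j} Fm.ff) ∧
    Satisfiable W E (Fm.disj f) ∧ E {ψ} (Fm.disj f) ∧ ∀ i, E {f i} ψ

/-- `Θ[X] = {φ ∈ L(Q) : (μ,φ) ∈ Θ for some μ ∈ X ∩ IC(P)}`. -/
def ThetaImage (WP : Fm P → Prop) (EP : Set (Fm P) → Fm P → Prop)
    (Θ : Fm P → Fm Q → Prop) (X : Set (Fm P)) : Set (Fm Q) :=
  {φ | ∃ μ ∈ X, IsIrredConj WP EP μ ∧ Θ μ φ}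

/-- A consequence relation `Θ ⊆ IC(P) × L(Q)` satisfying (R1), (R2), (R3). -/
def IsConsRel (WP : Fm P → Prop) (EP : Set (Fm P) → Fm P → Prop)
    (WQ : Fm Q → Prop) (EQ : Set (Fm Q) → Fm Q → Prop)
    (Θ : Fm P → Fm Q → Prop) : Prop :=
  (∀ μ ψ, Θ μ ψ → IsIrredConj WP EP μ ∧ WQ ψ) ∧
  (∀ μ ν ψ, IsIrredConj WP EP μ → EP {μ} ν → Θ ν ψ → Θ μ ψ) ∧
  (∀ μ φ ψ, WQ ψ → Θ μ φ → EQ {φ} ψ → Θ μ ψ) ∧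
  (∀ μ ψ, Θ μ ψ → ∃ ν, IsIrredConj WQ EQ ν ∧ Θ μ ν ∧ EQ {ν} ψ)

/-- Composition of consequence relations. -/
def consRelComp (WQ : Fm Q → Prop) (EQ : Set (Fm Q) → Fm Q → Prop)
    (Θ : Fm P → Fm Q → Prop) (Θ' : Fm Q → Fm R → Prop) : Fm P → Fm R → Prop :=
  fun μ φ => ∃ ν, IsIrredConj WQ EQ ν ∧ Θ μ ν ∧ Θ' ν φ

/-- The identity consequence relation `(μ,φ) ∈ id_P ↔ φ ∈ {μ}[⊢_P]`. -/
def consRelId (W : Fm P → Prop) (E : Set (Fm P) → Fm P → Prop) : Fm P → Fm P → Prop :=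
  fun μ φ => IsIrredConj W E μ ∧ φ ∈ entClose W E {μ}

end Defs

/-- The poset of logical states of the calculus generated by the basis `(P,A)`,
ordered by set inclusion. -/
abbrev LSt (P : Type) (A : Set (Set P)) : Type 1 :=
  {S : Set (Fm P) // IsLogicalState (Fm.WF A) (Fm.Seq A) S}

/- ## Domain-theoretic notions -/

/-- A compact element of a poset (w.r.t. suprema of directed subsets). -/
def IsCompactElt {α : Type*} [PartialOrder α] (x : α) : Prop :=
  ∀ d : Set α, d.Nonempty → DirectedOn (· ≤ ·) d → ∀ s, IsLUB d s → x ≤ s →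
    ∃ y ∈ d, x ≤ y

/-- An algebraic domain: a pointed dcpo in which every element is the
supremum of the directed set of compact elements below it. -/
def IsAlgebraicDomain (α : Type*) [PartialOrder α] : Prop :=
  (∃ b : α, ∀ x, b ≤ x) ∧
  (∀ d : Set α, d.Nonempty → DirectedOn (· ≤ ·) d → ∃ s, IsLUB d s) ∧
  (∀ x : α, ({k : α | IsCompactElt k ∧ k ≤ x}).Nonempty ∧
    DirectedOn (· ≤ ·) {k : α | IsCompactElt k ∧ k ≤ x} ∧
    IsLUB {k : α | IsCompactElt k ∧ k ≤ x} x)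

/-- An algebraic L-domain: an algebraic domain in which every principal ideal
`↓x` is a complete lattice (every subset of `↓x` has a supremum in `↓x`). -/
def IsAlgebraicLDomain (α : Type*) [PartialOrder α] : Prop :=
  IsAlgebraicDomain α ∧
  ∀ x : α, ∀ T : Set α, T ⊆ Set.Iic x → ∃ s ∈ Set.Iic x,
    (∀ t ∈ T, t ≤ s) ∧ ∀ u ∈ Set.Iic x, (∀ t ∈ T, t ≤ u) → s ≤ u

/- ## The calculus associated with an algebraic L-domain -/

/-- The atomic formulae of the associated calculus: (upsets of) elements of
`K*(D)`, the compact non-bottom elements. -/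
abbrev LAtom (D : Type) [PartialOrder D] : Type := {x : D // IsCompactElt x ∧ ¬ IsBot x}

/-- The interpretation `φ̂ ⊆ D` of a formula: `F, T, ∧, ⋁̇` become
`∅, D`, intersection and union. -/
def hat {D : Type} [PartialOrder D] : Fm (LAtom D) → Set D
  | Fm.atom x => Set.Ici x.val
  | Fm.tt => Set.univ
  | Fm.ff => ∅
  | Fm.conj φ ψ => hat φ ∩ hat ψ
  | Fm.disj f => ⋃ i, hat (f i)

/-- The formulae `L(P_D)` of the associated calculus: disjunctions only of
families with pairwise disjoint interpretations. -/
inductive DWF {D : Type} [PartialOrder D] : Fm (LAtom D) → Prop where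
  | atom (p : LAtom D) : DWF (Fm.atom p)
  | tt : DWF Fm.tt
  | ff : DWF Fm.ff
  | conj {φ ψ : Fm (LAtom D)} : DWF φ → DWF ψ → DWF (Fm.conj φ ψ)
  | disj {ι : Type} {f : ι → Fm (LAtom D)} : (∀ i, DWF (f i)) →
      (∀ i j, i ≠ j → hat (f i) ∩ hat (f j) = ∅) → DWF (Fm.disj f)

/-- Validity in the associated calculus: `ψ₁,…,ψₙ ⊢_D φ` iff
`ψ̂₁ ∩ … ∩ ψ̂ₙ ⊆ φ̂`. -/
def DSeq {D : Type} [PartialOrder D] (Γ : Set (Fm (LAtom D))) (φ : Fm (LAtom D)) : Prop :=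
  ⋂₀ (hat '' Γ) ⊆ hat φ

/-- A decomposable subset of `D`: the upper set `↑A` of a pairwise
inconsistent set `A` of compact elements. -/
def IsDecomposable {D : Type} [PartialOrder D] (U : Set D) : Prop :=
  ∃ A : Set D, (∀ a ∈ A, IsCompactElt a) ∧
    (∀ a ∈ A, ∀ b ∈ A, a ≠ b → Set.Ici a ∩ Set.Ici b = ∅) ∧
    U = ⋃ a ∈ A, Set.Ici a

/-- The conjunction `↑x₁ ∧ ↑x₂ ∧ … ∧ ↑xₙ` of a nonempty list of atoms. -/
def bigConj {P : Type} (x : P) (l : List P) : Fm P :=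
  l.foldl (fun φ y => Fm.conj φ (Fm.atom y)) (Fm.atom x)

/-! In an L-domain every upper bound `z` of a set `Y` lies above exactly one minimal upper
bound of `Y`, namely the supremum of `Y` in the complete lattice `↓z`; when `Y` is a finite
set of compact elements, these minimal upper bounds are compact. Their upsets therefore
partition the interpretation `upperBounds Y` of `↑x₁ ∧ … ∧ ↑xₙ` into pairwise disjoint atoms,
and irreducibility forces one of them to contain everything, i.e. to be the supremum of `Y`.
Conversely, if `s = sup Y` exists, the conjunction is interpreted as `↑s`, and a disjoint
family covering `↑s` must contain `s`, hence `↑s`, in one of its members. -/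

lemma DirectedOn.exists_mem_upperBounds_of_finite {α : Type*} [Preorder α] {d S : Set α}
    (hd : DirectedOn (· ≤ ·) d) (hne : d.Nonempty) (hS : S.Finite)
    (h : ∀ a ∈ S, ∃ b ∈ d, a ≤ b) : ∃ b ∈ d, b ∈ upperBounds S := by
  have : Nonempty d := hne.to_subtype
  have : Finite S := hS.to_subtype
  choose g hgd hg using fun a : S => h a a.2
  obtain ⟨z, hz⟩ := (directedOn_iff_directed.mp hd).finite_le (fun a => ⟨g a, hgd a⟩)
  exact ⟨z, z.2, fun a ha => (hg ⟨a, ha⟩).trans (hz ⟨a, ha⟩)⟩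

lemma IsLeast.eq_of_minimal_upperBounds {α : Type*} [PartialOrder α] {Y : Set α} {z s m : α}
    (hs : IsLeast (upperBounds Y ∩ Set.Iic z) s) (hm : Minimal (· ∈ upperBounds Y) m)
    (hmz : m ≤ z) : s = m :=
  le_antisymm (hs.2 ⟨hm.prop, hmz⟩) (hm.le_of_le hs.1.1 (hs.2 ⟨hm.prop, hmz⟩))

namespace IsAlgebraicLDomain

variable {α : Type*} [PartialOrder α] {Y : Set α}

lemma exists_isLeast_upperBounds_inter_Iic (hD : IsAlgebraicLDomain α) {z : α}
    (hz : z ∈ upperBounds Y) : ∃ s, IsLeast (upperBounds Y ∩ Set.Iic z) s := by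
  obtain ⟨s, hsz, hsY, hleast⟩ := hD.2 z Y fun y hy => hz hy
  exact ⟨s, ⟨hsY, hsz⟩, fun u hu => hleast u hu.2 hu.1⟩

lemma exists_minimal_upperBounds_le (hD : IsAlgebraicLDomain α) {z : α}
    (hz : z ∈ upperBounds Y) : ∃ m, Minimal (· ∈ upperBounds Y) m ∧ m ≤ z := by
  obtain ⟨s, hs⟩ := hD.exists_isLeast_upperBounds_inter_Iic hz
  exact ⟨s, ⟨hs.1.1, fun u hu hus => hs.2 ⟨hu, hus.trans hs.1.2⟩⟩, hs.1.2⟩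

lemma eq_of_minimal_upperBounds_of_le (hD : IsAlgebraicLDomain α) {m m' w : α}
    (hm : Minimal (· ∈ upperBounds Y) m) (hm' : Minimal (· ∈ upperBounds Y) m')
    (hmw : m ≤ w) (hm'w : m' ≤ w) : m = m' := by
  obtain ⟨s, hs⟩ := hD.exists_isLeast_upperBounds_inter_Iic (fun y hy => (hm.prop hy).trans hmw)
  exact (hs.eq_of_minimal_upperBounds hm hmw).symm.trans (hs.eq_of_minimal_upperBounds hm' hm'w)

lemma isCompactElt_of_minimal_upperBounds (hD : IsAlgebraicLDomain α) (hYfin : Y.Finite)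
    (hYc : ∀ y ∈ Y, IsCompactElt y) {m : α} (hm : Minimal (· ∈ upperBounds Y) m) :
    IsCompactElt m := by
  intro d hdne hdir t ht hmt
  obtain ⟨b, hbd, hbY⟩ := hdir.exists_mem_upperBounds_of_finite hdne hYfin
    fun y hy => hYc y hy d hdne hdir t ht ((hm.prop hy).trans hmt)
  obtain ⟨s, hs⟩ := hD.exists_isLeast_upperBounds_inter_Iic (fun y hy => (hm.prop hy).trans hmt)
  refine ⟨b, hbd, ?_⟩
  rw [← hs.eq_of_minimal_upperBounds hm hmt]
  exact hs.2 ⟨hbY, ht.1 hbd⟩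

end IsAlgebraicLDomain

section Calculus

variable {D : Type} [PartialOrder D]

lemma isUpperSet_hat (φ : Fm (LAtom D)) : IsUpperSet (hat φ) := by
  induction φ with
  | atom p => exact isUpperSet_Ici _
  | tt => exact isUpperSet_univ
  | ff => exact isUpperSet_empty
  | conj φ ψ ihφ ihψ => exact ihφ.inter ihψ
  | disj f ih => exact isUpperSet_iUnion ih

lemma dSeq_singleton_iff {μ φ : Fm (LAtom D)} : DSeq {μ} φ ↔ hat μ ⊆ hat φ := by
  rw [DSeq, Set.image_singleton, Set.sInter_singleton]

lemma dSeq_pair_ff_iff {φ ψ : Fm (LAtom D)} :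
    DSeq {φ, ψ} Fm.ff ↔ Disjoint (hat φ) (hat ψ) := by
  rw [DSeq, Set.image_pair, Set.sInter_pair, Set.disjoint_iff]
  rfl

lemma bigConj_induction {P : Type} {p : Fm P → Prop} (atom : ∀ a, p (Fm.atom a))
    (conj : ∀ φ ψ, p φ → p ψ → p (Fm.conj φ ψ)) (x : P) (l : List P) :
    p (bigConj x l) := by
  suffices ∀ φ, p φ → p (l.foldl (fun φ y => Fm.conj φ (Fm.atom y)) φ) from this _ (atom x)
  induction l with
  | nil => exact fun _ hφ => hφ
  | cons y l ih => exact fun φ hφ => ih _ (conj _ _ hφ (atom y))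

lemma mem_hat_foldl_conj_atom {d : D} (l : List (LAtom D)) (φ : Fm (LAtom D)) :
    d ∈ hat (l.foldl (fun φ y => Fm.conj φ (Fm.atom y)) φ) ↔
      d ∈ hat φ ∧ ∀ y ∈ l, y.val ≤ d := by
  induction l generalizing φ with
  | nil => simp
  | cons y l ih =>
      simp only [List.foldl_cons, ih, hat, Set.mem_inter_iff, Set.mem_Ici, List.forall_mem_cons,
        and_assoc]

lemma hat_bigConj (x : LAtom D) (l : List (LAtom D)) :
    hat (bigConj x l) = upperBounds {d : D | ∃ y ∈ x :: l, y.val = d} := by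
  ext d
  rw [bigConj, mem_hat_foldl_conj_atom, mem_upperBounds]
  constructor
  · rintro ⟨hx, hl⟩ _ ⟨y, hy, rfl⟩
    rcases List.mem_cons.mp hy with rfl | hy
    exacts [hx, hl y hy]
  · intro h
    exact ⟨h _ ⟨x, List.mem_cons_self, rfl⟩,
      fun y hy => h _ ⟨y, List.mem_cons_of_mem _ hy, rfl⟩⟩

lemma isIrredConj_of_hat_eq_Ici {μ : Fm (LAtom D)} (hshape : ConjShape μ) (hwf : DWF μ) {s : D}
    (hμ : hat μ = Set.Ici s) (hs : ¬ IsBot s) : IsIrredConj DWF DSeq μ := by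
  have hsμ : s ∈ hat μ := hμ ▸ Set.self_mem_Ici
  refine ⟨⟨hshape, hwf, fun ⟨_, htaut⟩ => hs ?_, fun ⟨_, hcontra⟩ => ?_⟩, ?_⟩
  · exact fun b => hμ.le (dSeq_singleton_iff.mp htaut (Set.mem_univ b))
  · exact dSeq_singleton_iff.mp hcontra hsμ
  · intro ι f _ _ hcover
    obtain ⟨i, hsi⟩ := Set.mem_iUnion.mp (dSeq_singleton_iff.mp hcover hsμ)
    exact ⟨i, dSeq_singleton_iff.mpr (hμ ▸ fun _ hw => isUpperSet_hat (f i) hw hsi)⟩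

lemma exists_isLUB_of_isIrredConj (hD : IsAlgebraicLDomain D) {Y : Set D} (hYfin : Y.Finite)
    (hYc : ∀ y ∈ Y, IsCompactElt y) {y₀ : D} (hy₀Y : y₀ ∈ Y) (hy₀ : ¬ IsBot y₀)
    {μ : Fm (LAtom D)} (hμ : hat μ = upperBounds Y) (hirr : IsIrredConj DWF DSeq μ) :
    ∃ s, IsLUB Y s := by
  let M := {m : D // Minimal (· ∈ upperBounds Y) m}
  let atomOf (m : M) : LAtom D :=
    ⟨m.1, hD.isCompactElt_of_minimal_upperBounds hYfin hYc m.2,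
      fun hbot => hy₀ (hbot.mono (m.2.prop hy₀Y))⟩
  have hdisj (m m' : M) (hne : m ≠ m') : DSeq {Fm.atom (atomOf m), Fm.atom (atomOf m')} Fm.ff :=
    dSeq_pair_ff_iff.mpr <| Set.disjoint_left.mpr fun _ hm hm' =>
      hne (Subtype.ext (hD.eq_of_minimal_upperBounds_of_le m.2 m'.2 hm hm'))
  have hcover : DSeq {μ} (Fm.disj fun m => Fm.atom (atomOf m)) := by
    refine dSeq_singleton_iff.mpr fun z hz => Set.mem_iUnion.mpr ?_
    obtain ⟨m, hm, hmz⟩ := hD.exists_minimal_upperBounds_le (hμ ▸ hz : z ∈ upperBounds Y)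
    exact ⟨⟨m, hm⟩, hmz⟩
  obtain ⟨m, hm⟩ := hirr.2 M _ (fun _ => DWF.atom _) hdisj hcover
  exact ⟨m.1, m.2.prop, fun u hu => dSeq_singleton_iff.mp hm (hμ ▸ hu : u ∈ hat μ)⟩

end Calculus

/-- In the calculus associated with an algebraic L-domain `D`,
the conjunction `↑x₁ ∧ … ∧ ↑xₙ` (over a nonempty finite subset of `K*(D)`)
is an irreducible conjunction iff `sup{x₁,…,xₙ}` exists in `D`. -/
theorem stmt14 (D : Type) [PartialOrder D] (hD : IsAlgebraicLDomain D)
    (x : LAtom D) (l : List (LAtom D)) :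
    IsIrredConj DWF DSeq (bigConj x l) ↔
      ∃ s : D, IsLUB {d : D | ∃ y ∈ x :: l, (y : LAtom D).val = d} s := by
  have hxY : x.val ∈ {d : D | ∃ y ∈ x :: l, (y : LAtom D).val = d} :=
    ⟨x, List.mem_cons_self, rfl⟩
  constructor
  · refine exists_isLUB_of_isIrredConj hD ((x :: l).finite_toSet.image _) ?_ hxY x.2.2
      (hat_bigConj x l)
    rintro _ ⟨y, -, rfl⟩
    exact y.2.1
  · rintro ⟨s, hs⟩
    exact isIrredConj_of_hat_eq_Ici
      (bigConj_induction ConjShape.atom (fun _ _ => ConjShape.conj) x l)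
      (bigConj_induction DWF.atom (fun _ _ => DWF.conj) x l)
      ((hat_bigConj x l).trans hs.upperBounds_eq) fun hbot => x.2.2 (hbot.mono (hs.1 hxY))
end

section
/- For any algebraic L-domain (D,≤), the associated disjunctive sequent calculus (L(P_D),⊢_D) is expressive: for every satisfiable formula ψ of (L(P_D),⊢_D) there exists an irreducible flat formula ⋁̇_{i∈I} μ_i such that ψ ⊢_D ⋁̇_{i∈I} μ_i is valid and μ_i ⊢_D ψ is valid for all i ∈ I. -/
section Aux

variable {D : Type} [PartialOrder D]

/-- The interpretation of any formula is an upper set. -/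
lemma hat_upper (φ : Fm (LAtom D)) {x y : D} (hxy : x ≤ y) (hx : x ∈ hat φ) :
    y ∈ hat φ := by
  induction φ with
  | atom p => exact le_trans hx hxy
  | tt => trivial
  | ff => exact hx.elim
  | conj φ ψ ihφ ihψ => exact ⟨ihφ hx.1, ihψ hx.2⟩
  | disj f ih =>
      obtain ⟨i, hi⟩ := Set.mem_iUnion.mp hx
      exact Set.mem_iUnion.mpr ⟨i, ih i hi⟩

lemma dseq_singleton (φ ψ : Fm (LAtom D)) : DSeq {φ} ψ ↔ hat φ ⊆ hat ψ := by
  unfold DSeq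
  rw [Set.image_singleton, Set.sInter_singleton]

/-- Intersection of two decomposable sets is decomposable (L-domain structure). -/
lemma inter_decomp (hD : IsAlgebraicLDomain D) {A B : Set D}
    (hAc : ∀ a ∈ A, IsCompactElt a)
    (hAd : ∀ a ∈ A, ∀ b ∈ A, a ≠ b → Set.Ici a ∩ Set.Ici b = ∅)
    (hBc : ∀ a ∈ B, IsCompactElt a)
    (hBd : ∀ a ∈ B, ∀ b ∈ B, a ≠ b → Set.Ici a ∩ Set.Ici b = ∅) :
    ∃ C : Set D, (∀ c ∈ C, IsCompactElt c) ∧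
      (∀ a ∈ C, ∀ b ∈ C, a ≠ b → Set.Ici a ∩ Set.Ici b = ∅) ∧
      (⋃ a ∈ A, Set.Ici a) ∩ (⋃ b ∈ B, Set.Ici b) = ⋃ c ∈ C, Set.Ici c := by
  classical
  set U : Set D := ⋃ a ∈ A, Set.Ici a with hU
  set V : Set D := ⋃ b ∈ B, Set.Ici b with hV
  have memU : ∀ x, x ∈ U ↔ ∃ a ∈ A, a ≤ x := by
    intro x; simp [hU, Set.mem_iUnion, Set.mem_Ici]
  have memV : ∀ x, x ∈ V ↔ ∃ b ∈ B, b ≤ x := by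
    intro x; simp [hV, Set.mem_iUnion, Set.mem_Ici]
  -- C : set of minimal elements of U ∩ V
  set C : Set D := {c | c ∈ U ∩ V ∧ ∀ t ∈ U ∩ V, t ≤ c → t = c} with hC
  -- local sup of {a,b} below x
  have sup2 : ∀ a b x : D, a ≤ x → b ≤ x → ∃ s, s ≤ x ∧ a ≤ s ∧ b ≤ s ∧
      ∀ u, u ≤ x → a ≤ u → b ≤ u → s ≤ u := by
    intro a b x ha hb
    obtain ⟨s, hsx, hub, hleast⟩ := hD.2 x {a, b} (by
      intro t ht
      rcases ht with h | h
      · subst h; exact ha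
      · simp only [Set.mem_singleton_iff] at h; subst h; exact hb)
    refine ⟨s, hsx, hub a (by simp), hub b (by simp), ?_⟩
    intro u hux hau hbu
    refine hleast u hux ?_
    intro t ht
    rcases ht with h | h
    · subst h; exact hau
    · simp only [Set.mem_singleton_iff] at h; subst h; exact hbu
  -- uniqueness of the A-witness below a common point
  have wA : ∀ {a a' x : D}, a ∈ A → a' ∈ A → a ≤ x → a' ≤ x → a = a' := by
    intro a a' x ha ha' hax ha'x
    by_contra hne
    have := hAd a ha a' ha' hne
    have : x ∈ Set.Ici a ∩ Set.Ici a' := ⟨hax, ha'x⟩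
    rw [hAd a ha a' ha' hne] at this
    exact this
  have wB : ∀ {b b' x : D}, b ∈ B → b' ∈ B → b ≤ x → b' ≤ x → b = b' := by
    intro b b' x hb hb' hbx hb'x
    by_contra hne
    have : x ∈ Set.Ici b ∩ Set.Ici b' := ⟨hbx, hb'x⟩
    rw [hBd b hb b' hb' hne] at this
    exact this
  -- every element of U ∩ V is above a minimal one
  have minEx : ∀ x ∈ U ∩ V, ∃ c ∈ C, c ≤ x := by
    rintro x ⟨hxU, hxV⟩
    obtain ⟨a, haA, hax⟩ := (memU x).mp hxU
    obtain ⟨b, hbB, hbx⟩ := (memV x).mp hxV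
    obtain ⟨s, hsx, has, hbs, hleast⟩ := sup2 a b x hax hbx
    have hsUV : s ∈ U ∩ V := ⟨(memU s).mpr ⟨a, haA, has⟩, (memV s).mpr ⟨b, hbB, hbs⟩⟩
    refine ⟨s, ⟨hsUV, ?_⟩, hsx⟩
    rintro t ⟨htU, htV⟩ hts
    obtain ⟨a', ha'A, ha't⟩ := (memU t).mp htU
    obtain ⟨b', hb'B, hb't⟩ := (memV t).mp htV
    have ha'x : a' ≤ x := le_trans ha't (le_trans hts hsx)
    have hb'x : b' ≤ x := le_trans hb't (le_trans hts hsx)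
    have haa : a' = a := wA ha'A haA ha'x hax
    have hbb : b' = b := wB hb'B hbB hb'x hbx
    subst haa; subst hbb
    exact le_antisymm hts (hleast t (le_trans hts hsx) ha't hb't)
  -- distinct minimal elements have disjoint cones
  have uniq : ∀ c ∈ C, ∀ c' ∈ C, ∀ x : D, c ≤ x → c' ≤ x → c = c' := by
    rintro c ⟨⟨hcU, hcV⟩, hcmin⟩ c' ⟨⟨hc'U, hc'V⟩, hc'min⟩ x hcx hc'x
    obtain ⟨a, haA, hac⟩ := (memU c).mp hcU
    obtain ⟨b, hbB, hbc⟩ := (memV c).mp hcV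
    obtain ⟨a', ha'A, ha'c'⟩ := (memU c').mp hc'U
    obtain ⟨b', hb'B, hb'c'⟩ := (memV c').mp hc'V
    have haa : a = a' := wA haA ha'A (le_trans hac hcx) (le_trans ha'c' hc'x)
    have hbb : b = b' := wB hbB hb'B (le_trans hbc hcx) (le_trans hb'c' hc'x)
    subst haa; subst hbb
    obtain ⟨s, hsx, has, hbs, hleast⟩ :=
      sup2 a b x (le_trans hac hcx) (le_trans hbc hcx)
    have hsUV : s ∈ U ∩ V := ⟨(memU s).mpr ⟨a, haA, has⟩, (memV s).mpr ⟨b, hbB, hbs⟩⟩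
    have h1 : s = c := hcmin s hsUV (hleast c hcx hac hbc)
    have h2 : s = c' := hc'min s hsUV (hleast c' hc'x ha'c' hb'c')
    rw [← h1, h2]
  refine ⟨C, ?_, ?_, ?_⟩
  · -- compactness of minimal elements
    rintro c ⟨⟨hcU, hcV⟩, hcmin⟩
    obtain ⟨a, haA, hac⟩ := (memU c).mp hcU
    obtain ⟨b, hbB, hbc⟩ := (memV c).mp hcV
    intro d hdne hddir u hu hcu
    obtain ⟨d₁, hd₁, had₁⟩ := hAc a haA d hdne hddir u hu (le_trans hac hcu)
    obtain ⟨d₂, hd₂, hbd₂⟩ := hBc b hbB d hdne hddir u hu (le_trans hbc hcu)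
    obtain ⟨e, he, hd₁e, hd₂e⟩ := hddir d₁ hd₁ d₂ hd₂
    have heu : e ≤ u := hu.1 he
    obtain ⟨s, hsu, has, hbs, hleast⟩ :=
      sup2 a b u (le_trans hac hcu) (le_trans hbc hcu)
    have hsUV : s ∈ U ∩ V := ⟨(memU s).mpr ⟨a, haA, has⟩, (memV s).mpr ⟨b, hbB, hbs⟩⟩
    have hsc : s = c := hcmin s hsUV (hleast c hcu hac hbc)
    have : s ≤ e := hleast e heu (le_trans had₁ hd₁e) (le_trans hbd₂ hd₂e)
    exact ⟨e, he, hsc ▸ this⟩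
  · -- pairwise disjointness
    intro c hc c' hc' hne
    ext x
    simp only [Set.mem_inter_iff, Set.mem_Ici, Set.mem_empty_iff_false, iff_false]
    rintro ⟨hcx, hc'x⟩
    exact hne (uniq c hc c' hc' x hcx hc'x)
  · -- the union
    ext x
    simp only [Set.mem_iUnion, Set.mem_Ici]
    constructor
    · intro hx
      obtain ⟨c, hc, hcx⟩ := minEx x hx
      exact ⟨c, hc, hcx⟩
    · rintro ⟨c, hc, hcx⟩
      rcases hc with ⟨⟨hcU, hcV⟩, -⟩
      refine ⟨(memU x).mpr ?_, (memV x).mpr ?_⟩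
      · obtain ⟨a, haA, hac⟩ := (memU c).mp hcU
        exact ⟨a, haA, le_trans hac hcx⟩
      · obtain ⟨b, hbB, hbc⟩ := (memV c).mp hcV
        exact ⟨b, hbB, le_trans hbc hcx⟩

/-- Decomposition of the interpretation of any wellformed formula. -/
lemma hat_decomp (hD : IsAlgebraicLDomain D) {φ : Fm (LAtom D)} (h : DWF φ) :
    ∃ A : Set D, (∀ a ∈ A, IsCompactElt a) ∧
      (∀ a ∈ A, ∀ b ∈ A, a ≠ b → Set.Ici a ∩ Set.Ici b = ∅) ∧
      hat φ = ⋃ a ∈ A, Set.Ici a := by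
  classical
  induction h with
  | atom p =>
      refine ⟨{p.val}, ?_, ?_, ?_⟩
      · rintro a rfl; exact p.prop.1
      · rintro a rfl b rfl hne; exact absurd rfl hne
      · simp [hat]
  | tt =>
      obtain ⟨b, hb⟩ := hD.1.1
      refine ⟨{b}, ?_, ?_, ?_⟩
      · rintro a rfl
        intro d hdne hddir s hs _
        obtain ⟨y, hy⟩ := hdne
        exact ⟨y, hy, hb y⟩
      · rintro a rfl c rfl hne; exact absurd rfl hne
      · ext x; simp [hat, hb x]
  | ff => exact ⟨∅, by simp, by simp, by simp [hat]⟩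
  | conj hφ hψ ihφ ihψ =>
      obtain ⟨A, hAc, hAd, hAu⟩ := ihφ
      obtain ⟨B, hBc, hBd, hBu⟩ := ihψ
      obtain ⟨C, hCc, hCd, hCu⟩ := inter_decomp hD hAc hAd hBc hBd
      exact ⟨C, hCc, hCd, by rw [hat, hAu, hBu, hCu]⟩
  | @disj ι f hwf hdisj ih =>
      choose Af hc hd hu using ih
      refine ⟨⋃ i, Af i, ?_, ?_, ?_⟩
      · rintro a ha
        obtain ⟨i, hi⟩ := Set.mem_iUnion.mp ha
        exact hc i a hi
      · intro a ha b hb hne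
        obtain ⟨i, hi⟩ := Set.mem_iUnion.mp ha
        obtain ⟨j, hj⟩ := Set.mem_iUnion.mp hb
        by_cases hij : i = j
        · subst hij; exact hd i a hi b hj hne
        · have h1 : Set.Ici a ⊆ hat (f i) := by
            rw [hu i]; exact Set.subset_biUnion_of_mem hi
          have h2 : Set.Ici b ⊆ hat (f j) := by
            rw [hu j]; exact Set.subset_biUnion_of_mem hj
          have := hdisj i j hij
          apply Set.eq_empty_of_subset_empty
          calc Set.Ici a ∩ Set.Ici b ⊆ hat (f i) ∩ hat (f j) :=
                Set.inter_subset_inter h1 h2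
            _ = ∅ := this
      · ext x
        simp only [hat, Set.mem_iUnion, Set.mem_Ici]
        constructor
        · rintro ⟨i, hi⟩
          rw [hu i] at hi
          simp only [Set.mem_iUnion, Set.mem_Ici] at hi
          obtain ⟨a, ha, hax⟩ := hi
          exact ⟨a, ⟨i, ha⟩, hax⟩
        · rintro ⟨a, ⟨i, ha⟩, hax⟩
          refine ⟨i, ?_⟩
          rw [hu i]
          simp only [Set.mem_iUnion, Set.mem_Ici]
          exact ⟨a, ha, hax⟩

end Aux

/-- For any algebraic L-domain `D`, the associated disjunctive
sequent calculus `(L(P_D),⊢_D)` is expressive. -/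
theorem stmt15 (D : Type) [PartialOrder D] (hD : IsAlgebraicLDomain D) :
    Expressive (DWF (D := D)) DSeq := by
  classical
  rintro ψ ⟨hψwf, hψnt, hψnc⟩
  obtain ⟨A, hAc, hAd, hAu⟩ := hat_decomp hD hψwf
  -- ψ is not a contradiction: hat ψ ≠ ∅ ; not a tautology: hat ψ ≠ univ
  have hne : hat ψ ≠ ∅ := by
    intro h
    exact hψnc ⟨hψwf, by rw [dseq_singleton, h]; exact Set.empty_subset _⟩
  have hnu : ¬ (Set.univ : Set D) ⊆ hat ψ := by
    intro h
    refine hψnt ⟨hψwf, ?_⟩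
    unfold DSeq
    rw [Set.image_singleton, Set.sInter_singleton]
    intro x _
    exact h (Set.mem_univ x)
  -- every a ∈ A is non-bottom
  have hnotbot : ∀ a ∈ A, ¬ IsBot a := by
    intro a ha hbot
    apply hnu
    rw [hAu]
    intro x _
    simp only [Set.mem_iUnion, Set.mem_Ici]
    exact ⟨a, ha, hbot x⟩
  -- the witness family
  refine ⟨A, fun a => Fm.atom ⟨a.val, hAc a.val a.prop, hnotbot a.val a.prop⟩,
    ?_, ?_, ?_, ?_, ?_⟩
  · -- each is an irreducible conjunction
    rintro ⟨a, ha⟩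
    constructor
    · refine ⟨ConjShape.atom _, DWF.atom _, ?_, ?_⟩
      · rintro ⟨-, ht⟩
        apply hnotbot a ha
        intro x
        have : x ∈ hat (Fm.atom (⟨a, hAc a ha, hnotbot a ha⟩ : LAtom D)) := by
          apply ht
          simp only [Set.mem_sInter, Set.image_singleton, Set.mem_singleton_iff]
          rintro t rfl
          trivial
        exact this
      · rintro ⟨-, hc⟩
        rw [dseq_singleton] at hc
        exact hc (le_refl a : a ∈ hat (Fm.atom (⟨a, hAc a ha, hnotbot a ha⟩ : LAtom D)))
    · intro ι g hgwf hgdisj hseq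
      rw [dseq_singleton] at hseq
      have hmem : a ∈ hat (Fm.disj g) := hseq (le_refl a)
      obtain ⟨i, hi⟩ := Set.mem_iUnion.mp hmem
      refine ⟨i, ?_⟩
      rw [dseq_singleton]
      intro x hx
      exact hat_upper (g i) hx hi
  · -- pairwise disjointness
    rintro ⟨a, ha⟩ ⟨b, hb⟩ hne
    have hab : a ≠ b := fun h => hne (Subtype.ext h)
    unfold DSeq
    rw [Set.image_pair, Set.sInter_pair]
    have : hat (Fm.atom (⟨a, hAc a ha, hnotbot a ha⟩ : LAtom D)) = Set.Ici a := rfl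
    rw [this]
    have : hat (Fm.atom (⟨b, hAc b hb, hnotbot b hb⟩ : LAtom D)) = Set.Ici b := rfl
    rw [this, hAd a ha b hb hab]
    exact le_refl _
  · -- the disjunction is satisfiable
    have hhat : hat (Fm.disj (fun a : A =>
        Fm.atom (⟨a.val, hAc a.val a.prop, hnotbot a.val a.prop⟩ : LAtom D))) = hat ψ := by
      rw [hAu]
      ext x
      simp only [hat, Set.mem_iUnion, Set.mem_Ici]
      constructor
      · rintro ⟨⟨a, ha⟩, hax⟩; exact ⟨a, ha, hax⟩
      · rintro ⟨a, ha, hax⟩; exact ⟨⟨a, ha⟩, hax⟩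
    refine ⟨DWF.disj (fun i => DWF.atom _) ?_, ?_, ?_⟩
    · rintro ⟨a, ha⟩ ⟨b, hb⟩ hne
      exact hAd a ha b hb (fun h => hne (Subtype.ext h))
    · rintro ⟨-, ht⟩
      apply hnu
      unfold DSeq at ht
      rw [Set.image_singleton, Set.sInter_singleton] at ht
      rw [← hhat]
      intro x hx
      exact ht (by trivial)
    · rintro ⟨-, hc⟩
      rw [dseq_singleton, hhat] at hc
      exact hne (Set.eq_empty_of_subset_empty hc)
  · -- ψ entails the disjunction
    rw [dseq_singleton]
    intro x hx
    rw [hAu] at hx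
    simp only [Set.mem_iUnion, Set.mem_Ici] at hx
    obtain ⟨a, ha, hax⟩ := hx
    exact Set.mem_iUnion.mpr ⟨⟨a, ha⟩, hax⟩
  · -- each disjunct entails ψ
    rintro ⟨a, ha⟩
    rw [dseq_singleton]
    intro x hx
    rw [hAu]
    simp only [Set.mem_iUnion, Set.mem_Ici]
    exact ⟨a, ha, hx⟩
end
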